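/- Let x, y ∈ ℝ³ be unit vectors with r := arccos⟨x,y⟩ satisfying 0 < r < π, and set e₁^x = (sin r)⁻¹ • (y − cos r • x), e₁^y = (sin r)⁻¹ • (cos r • y − x), e₂^x = x × e₁^x and e₂^y = y × e₁^y (cross products in ℝ³). Let u, v ∈ ℝ³ with ⟨u,x⟩ = 0 and ⟨v,y⟩ = 0, and define the geodesics γx(t) = cos(‖u‖t) • x + (sin(‖u‖t)/‖u‖) • u and γy(t) = cos(‖v‖t) • y + (sin(‖v‖t)/‖v‖) • v (with the convention that the coefficient of u is 0 when u = 0, as given by division by zero, and similarly for v). Writing u₂ = ⟨u, e₂^x⟩ and v₂ = ⟨v, e₂^y⟩, the second derivative at t = 0 of t ↦ arccos⟨γx(t), γy(t)⟩ equals (u₂² + v₂²)·cot r − 2·u₂·v₂ / sin r. (This is the Hessian of the spherical distance, i.e. the constant-curvature case k = 1 of the Hessian formula Hess(ρ)((u,v),(u,v)) = √k (u₂² + v₂²) cot(√k r) − 2√k u₂ v₂ / sin(√k r).) -/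

import Mathlib

/-!
Along the great circles `γx`, `γy` the function `f t = ⟪γx t, γy t⟫` has `f 0 = cos r`,
`f' 0 = ⟪u, y⟫ + ⟪x, v⟫` and, because `γ'' 0 = -‖u‖² • γ 0`,
`f'' 0 = 2 ⟪u, v⟫ - (‖u‖² + ‖v‖²) cos r`; the chain rule for `arccos` turns these into the
second derivative of the distance, in any real inner product space. In `ℝ³` both `e₂^x` and
`e₂^y` equal `(x × y) / sin r`, and the Gram determinant identity for
`⟪u, x × y⟫ ⟪v, x × y⟫`, together with `u ⊥ x` and `v ⊥ y`, rewrites `‖u‖²`, `⟪u, y⟫`, ... in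
terms of `u₂` and `v₂`.
-/

/-- The cross product on `ℝ³` (with the Euclidean inner product structure). -/
noncomputable def cross3 (a b : EuclideanSpace ℝ (Fin 3)) : EuclideanSpace ℝ (Fin 3) :=
  (WithLp.equiv 2 (Fin 3 → ℝ)).symm
    ![a 1 * b 2 - a 2 * b 1, a 2 * b 0 - a 0 * b 2, a 0 * b 1 - a 1 * b 0]

open Real
open scoped RealInnerProductSpace

theorem iteratedDeriv_two_arccos_comp {F F' : ℝ → ℝ} {F'' t₀ : ℝ}
    (hF : ∀ t, HasDerivAt F (F' t) t) (hF' : HasDerivAt F' F'' t₀)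
    (h₁ : -1 < F t₀) (h₂ : F t₀ < 1) :
    iteratedDeriv 2 (fun t => arccos (F t)) t₀ =
      -F'' / √(1 - F t₀ ^ 2) - F t₀ * F' t₀ ^ 2 / √(1 - F t₀ ^ 2) ^ 3 := by
  have hF_mem : ∀ᶠ t in nhds t₀, F t ∈ Set.Ioo (-1 : ℝ) 1 :=
    (hF t₀).continuousAt.preimage_mem_nhds (Ioo_mem_nhds h₁ h₂)
  have hderiv :
      deriv (fun t => arccos (F t)) =ᶠ[nhds t₀] fun t => -(1 / √(1 - F t ^ 2)) * F' t := by
    filter_upwards [hF_mem] with t ht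
    exact ((hasDerivAt_arccos ht.1.ne' ht.2.ne).comp t (hF t)).deriv
  have hpos : 0 < 1 - F t₀ ^ 2 := by nlinarith
  have hsqrt : HasDerivAt (fun t => √(1 - F t ^ 2))
      (-(2 * F t₀ * F' t₀) / (2 * √(1 - F t₀ ^ 2))) t₀ := by
    refine HasDerivAt.sqrt ?_ hpos.ne'
    simpa using ((hF t₀).pow 2).const_sub 1
  have hG : HasDerivAt (fun t => -(1 / √(1 - F t ^ 2)) * F' t) _ t₀ :=
    ((hasDerivAt_const t₀ (1 : ℝ)).div hsqrt (sqrt_pos.2 hpos).ne').neg.mul hF'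
  rw [iteratedDeriv_succ, iteratedDeriv_one, hderiv.deriv_eq, hG.deriv]
  simp only [Pi.neg_apply, Pi.div_apply]
  field_simp
  ring

section GreatCircle

variable {E : Type*} [NormedAddCommGroup E] [NormedSpace ℝ E]

noncomputable def greatCircle (x u : E) (t : ℝ) : E :=
  cos (‖u‖ * t) • x + (sin (‖u‖ * t) / ‖u‖) • u

lemma norm_div_norm_smul_self (u : E) : (‖u‖ / ‖u‖) • u = u := by
  rcases eq_or_ne u 0 with rfl | hu
  · simp
  · rw [div_self (norm_ne_zero_iff.2 hu), one_smul]

lemma greatCircle_zero (x u : E) : greatCircle x u 0 = x := by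
  simp [greatCircle]

lemma hasDerivAt_greatCircle (x u : E) (t : ℝ) :
    HasDerivAt (greatCircle x u) (-(‖u‖ * sin (‖u‖ * t)) • x + cos (‖u‖ * t) • u) t := by
  have hlin : HasDerivAt (fun t => ‖u‖ * t) ‖u‖ t := by
    simpa using (hasDerivAt_id t).const_mul ‖u‖
  refine ((hlin.cos.smul_const x).add ((hlin.sin.div_const ‖u‖).smul_const u)).congr_deriv ?_
  rw [mul_div_assoc, mul_smul (cos _), norm_div_norm_smul_self]
  module

lemma hasDerivAt_greatCircle_velocity_zero (x u : E) :
    HasDerivAt (fun t => -(‖u‖ * sin (‖u‖ * t)) • x + cos (‖u‖ * t) • u) (-‖u‖ ^ 2 • x) 0 := by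
  have hlin : HasDerivAt (fun t => ‖u‖ * t) ‖u‖ 0 := by
    simpa using (hasDerivAt_id (0 : ℝ)).const_mul ‖u‖
  refine (((hlin.sin.const_mul ‖u‖).neg.smul_const x).add (hlin.cos.smul_const u)).congr_deriv ?_
  simp only [mul_zero, sin_zero, cos_zero]
  module

end GreatCircle

theorem iteratedDeriv_two_arccos_inner_greatCircle {E : Type*} [NormedAddCommGroup E]
    [InnerProductSpace ℝ E] (x y u v : E) (h₁ : -1 < ⟪x, y⟫) (h₂ : ⟪x, y⟫ < 1) :
    iteratedDeriv 2 (fun t => arccos ⟪greatCircle x u t, greatCircle y v t⟫) 0 =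
      ((‖u‖ ^ 2 + ‖v‖ ^ 2) * ⟪x, y⟫ - 2 * ⟪u, v⟫) / √(1 - ⟪x, y⟫ ^ 2)
        - ⟪x, y⟫ * (⟪x, v⟫ + ⟪u, y⟫) ^ 2 / √(1 - ⟪x, y⟫ ^ 2) ^ 3 := by
  have hF t := (hasDerivAt_greatCircle x u t).inner ℝ (hasDerivAt_greatCircle y v t)
  have hF' := ((hasDerivAt_greatCircle x u 0).inner ℝ
      (hasDerivAt_greatCircle_velocity_zero y v)).add
    ((hasDerivAt_greatCircle_velocity_zero x u).inner ℝ (hasDerivAt_greatCircle y v 0))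
  rw [iteratedDeriv_two_arccos_comp hF hF' (by rwa [greatCircle_zero, greatCircle_zero])
    (by rwa [greatCircle_zero, greatCircle_zero])]
  simp only [greatCircle_zero, mul_zero, sin_zero, cos_zero, zero_smul, one_smul, neg_zero,
    zero_add, real_inner_smul_left, real_inner_smul_right]
  ring

lemma cross3_eq_toLp_crossProduct (a b : EuclideanSpace ℝ (Fin 3)) :
    cross3 a b = WithLp.toLp 2 (crossProduct (WithLp.ofLp a) (WithLp.ofLp b)) := rfl

lemma cross3_smul_sub_smul_self (x y : EuclideanSpace ℝ (Fin 3)) (c d : ℝ) :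
    cross3 x (c • (y - d • x)) = c • cross3 x y := by
  simp [cross3_eq_toLp_crossProduct, cross_self]

lemma cross3_smul_smul_self_sub (x y : EuclideanSpace ℝ (Fin 3)) (c d : ℝ) :
    cross3 y (c • (d • y - x)) = c • cross3 x y := by
  rw [cross3_eq_toLp_crossProduct, cross3_eq_toLp_crossProduct]
  simp [cross_self, cross_anticomm]

lemma inner_cross3_mul_inner_cross3 (u v x y : EuclideanSpace ℝ (Fin 3)) :
    ⟪u, cross3 x y⟫ * ⟪v, cross3 x y⟫ =
      !![⟪u, v⟫, ⟪u, x⟫, ⟪u, y⟫;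
         ⟪x, v⟫, ⟪x, x⟫, ⟪x, y⟫;
         ⟪y, v⟫, ⟪y, x⟫, ⟪y, y⟫].det := by
  simp [Matrix.det_fin_three, cross3, PiLp.inner_apply, Fin.sum_univ_three,
    -inner_self_eq_norm_sq_to_K]
  ring

/-- The Hessian of the spherical distance (curvature `k = 1`): for unit
vectors `x, y ∈ ℝ³` at spherical distance `r = arccos⟨x,y⟩ ∈ (0,π)`, tangent vectors `u ⊥ x`,
`v ⊥ y`, and the great-circle geodesics through `x, y` with velocities `u, v`, the second
derivative at `0` of the spherical distance between the geodesics equals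
`(u₂² + v₂²)·cot r − 2·u₂·v₂ / sin r`, where `u₂ = ⟨u, e₂^x⟩`, `v₂ = ⟨v, e₂^y⟩`. -/
theorem spherical_distance_second_variation
    (x y u v : EuclideanSpace ℝ (Fin 3)) (hx : ‖x‖ = 1) (hy : ‖y‖ = 1)
    (r : ℝ) (hr : r = Real.arccos (inner ℝ x y))
    (hr0 : 0 < r) (hrπ : r < Real.pi)
    (hux : (inner ℝ u x : ℝ) = 0) (hvy : (inner ℝ v y : ℝ) = 0)
    (e1x e1y e2x e2y : EuclideanSpace ℝ (Fin 3))
    (he1x : e1x = (Real.sin r)⁻¹ • (y - Real.cos r • x))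
    (he1y : e1y = (Real.sin r)⁻¹ • (Real.cos r • y - x))
    (he2x : e2x = cross3 x e1x) (he2y : e2y = cross3 y e1y) :
    iteratedDeriv 2
        (fun t =>
          Real.arccos
            (inner ℝ (Real.cos (‖u‖ * t) • x + (Real.sin (‖u‖ * t) / ‖u‖) • u)
              (Real.cos (‖v‖ * t) • y + (Real.sin (‖v‖ * t) / ‖v‖) • v) : ℝ)) 0 =
      ((inner ℝ u e2x : ℝ) ^ 2 + (inner ℝ v e2y : ℝ) ^ 2) * (Real.cos r / Real.sin r) -
        2 * (inner ℝ u e2x : ℝ) * (inner ℝ v e2y : ℝ) / Real.sin r := by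
  have hp₁ : -1 < ⟪x, y⟫ := arccos_lt_pi.1 (hr ▸ hrπ)
  have hp₂ : ⟪x, y⟫ < 1 := arccos_pos.1 (hr ▸ hr0)
  have hcos : cos r = ⟪x, y⟫ := hr ▸ cos_arccos hp₁.le hp₂.le
  have hsin : sin r = √(1 - ⟪x, y⟫ ^ 2) := hr ▸ sin_arccos _
  have hS : 0 < sin r := sin_pos_of_pos_of_lt_pi hr0 hrπ
  have hS2 : sin r ^ 2 = 1 - ⟪x, y⟫ ^ 2 := by rw [hsin, sq_sqrt (by nlinarith)]
  have huu := inner_cross3_mul_inner_cross3 u u x y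
  have hvv := inner_cross3_mul_inner_cross3 v v x y
  have huv := inner_cross3_mul_inner_cross3 u v x y
  simp only [Matrix.det_fin_three, Matrix.of_apply, Matrix.cons_val', Matrix.cons_val_zero,
    Matrix.cons_val_one, Matrix.cons_val_fin_one, Matrix.cons_val, Fin.isValue,
    inner_self_eq_norm_sq_to_K, ringHom_apply, hx, hy, one_pow, real_inner_comm u x, hux,
    real_inner_comm x v, real_inner_comm v y, hvy, real_inner_comm u y, real_inner_comm x y,
    mul_one, mul_zero, zero_mul, sub_zero, add_zero] at huu hvv huv
  refine (iteratedDeriv_two_arccos_inner_greatCircle x y u v hp₁ hp₂).trans ?_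
  rw [he2x, he1x, cross3_smul_sub_smul_self, he2y, he1y, cross3_smul_smul_self_sub,
    real_inner_smul_right, real_inner_smul_right, hcos, ← hsin]
  field_simp
  linear_combination (-⟪x, y⟫) * huu + (-⟪x, y⟫) * hvv + 2 * huv
    + ((‖u‖ ^ 2 + ‖v‖ ^ 2) * ⟪x, y⟫ - 2 * ⟪u, v⟫) * hS2
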